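/- The satisfiability problem for the ∀*-fragment of linear HyperPDL-Δ reduces to single-trace nonemptiness: a formula φ ≡ ∀π₁…∀π_n. ψ (ψ quantifier-free) is satisfiable by some nonempty trace set T if and only if it is satisfiable by a singleton trace set {t}; equivalently, φ is satisfiable iff the one-variable formula ψ' obtained by collapsing all path variables to a single fresh variable π is satisfied by some single trace. -/

import Mathlib

/-- A trace: an infinite alternating sequence of labels (sets of atomic propositions)
and atomic programs; `lab j` is the label at step `j`, `act j` the atomic program
between steps `j` and `j+1`. -/
structure Trace (AP P : Type) where
  lab : ℕ → Set AP
  act : ℕ → P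

/-- The suffix of a trace starting after `j` steps. -/
def Trace.drop {AP P : Type} (t : Trace AP P) (j : ℕ) : Trace AP P :=
  ⟨fun m => t.lab (j + m), fun m => t.act (j + m)⟩

/-- The shifted trace assignment. -/
def TAdrop {AP P : Type} {n : ℕ} (Pa : Fin n → Trace AP P) (j : ℕ) : Fin n → Trace AP P :=
  fun l => (Pa l).drop j

mutual
/-- Quantifier-free HyperPDL-Δ formulas over `n` path variables. -/
inductive QF (AP P : Type) (n : ℕ) : Type
  | atom (a : AP) (l : Fin n) : QF AP P n
  | not (φ : QF AP P n) : QF AP P n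
  | and (φ ψ : QF AP P n) : QF AP P n
  | or (φ ψ : QF AP P n) : QF AP P n
  | dia (α : Pg AP P n) (φ : QF AP P n) : QF AP P n
  | box (α : Pg AP P n) (φ : QF AP P n) : QF AP P n
  | delta (α : Pg AP P n) : QF AP P n

/-- Programs of HyperPDL-Δ (with `none` as the wildcard coordinate). -/
inductive Pg (AP P : Type) (n : ℕ) : Type
  | atom (t : Fin n → Option P) : Pg AP P n
  | eps : Pg AP P n
  | sum (a b : Pg AP P n) : Pg AP P n
  | seq (a b : Pg AP P n) : Pg AP P n
  | star (a : Pg AP P n) : Pg AP P n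
  | test (φ : QF AP P n) : Pg AP P n
end

mutual
/-- Satisfaction of a quantifier-free formula by a trace assignment. -/
def QF.Sat {AP P : Type} {n : ℕ} : QF AP P n → (Fin n → Trace AP P) → Prop
  | .atom a l, Pa => a ∈ (Pa l).lab 0
  | .not φ, Pa => ¬ φ.Sat Pa
  | .and φ ψ, Pa => φ.Sat Pa ∧ ψ.Sat Pa
  | .or φ ψ, Pa => φ.Sat Pa ∨ ψ.Sat Pa
  | .dia α φ, Pa => ∃ j, α.Rel Pa 0 j ∧ φ.Sat (TAdrop Pa j)
  | .box α φ, Pa => ∀ j, α.Rel Pa 0 j → φ.Sat (TAdrop Pa j)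
  | .delta α, Pa => ∃ k : ℕ → ℕ, k 0 = 0 ∧ (∀ i, k i ≤ k (i + 1)) ∧
      ∀ i, α.Rel Pa (k i) (k (i + 1))

/-- The relation `(Π, i, k) ∈ R(α)` (indices count steps). -/
def Pg.Rel {AP P : Type} {n : ℕ} : Pg AP P n → (Fin n → Trace AP P) → ℕ → ℕ → Prop
  | .atom t, Pa, i, k => k = i + 1 ∧ ∀ l, t l = none ∨ t l = some ((Pa l).act i)
  | .eps, _, i, k => i = k
  | .sum a b, Pa, i, k => a.Rel Pa i k ∨ b.Rel Pa i k
  | .seq a b, Pa, i, k => ∃ j, i ≤ j ∧ j ≤ k ∧ a.Rel Pa i j ∧ b.Rel Pa j k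
  | .star a, Pa, i, k => ∃ (m : ℕ) (js : Fin (m + 1) → ℕ), js 0 = i ∧ js (Fin.last m) = k ∧
      ∀ l : Fin m, js l.castSucc ≤ js l.succ ∧ a.Rel Pa (js l.castSucc) (js l.succ)
  | .test φ, Pa, i, k => i = k ∧ φ.Sat (TAdrop Pa i)
end

/-- An unsatisfiable formula (in one path variable). -/
def fls (AP P : Type) [Inhabited AP] : QF AP P 1 :=
  .and (.atom default 0) (.not (.atom default 0))

open Classical in
/-- Compression of a program tuple onto a single path variable: all-wildcard tuples become
the wildcard, tuples whose non-wildcard coordinates all equal a single `σ` become `(σ)`,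
and tuples containing two distinct concrete atomic programs become the unsatisfiable
program `false? · (·)`. -/
noncomputable def collapseTuple {P : Type} (AP : Type) [Inhabited AP] {n : ℕ}
    (t : Fin n → Option P) : Pg AP P 1 :=
  if ∀ l, t l = none then .atom (fun _ => none)
  else if h : ∃ σ : P, ∀ l, t l = none ∨ t l = some σ then .atom (fun _ => some h.choose)
  else .seq (.test (fls AP P)) (.atom fun _ => none)

mutual
/-- Collapse all path variables of a quantifier-free formula to a single one. -/
noncomputable def QF.collapse {AP P : Type} [Inhabited AP] {n : ℕ} :
    QF AP P n → QF AP P 1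
  | .atom a _ => .atom a 0
  | .not φ => .not φ.collapse
  | .and φ ψ => .and φ.collapse ψ.collapse
  | .or φ ψ => .or φ.collapse ψ.collapse
  | .dia α φ => .dia α.collapse φ.collapse
  | .box α φ => .box α.collapse φ.collapse
  | .delta α => .delta α.collapse

/-- Collapse all path variables of a program to a single one. -/
noncomputable def Pg.collapse {AP P : Type} [Inhabited AP] {n : ℕ} :
    Pg AP P n → Pg AP P 1
  | .atom t => collapseTuple AP t
  | .eps => .eps
  | .sum a b => .sum a.collapse b.collapse
  | .seq a b => .seq a.collapse b.collapse
  | .star a => .star a.collapse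
  | .test φ => .test φ.collapse
end

/-!
On a universally quantified formula, shrinking the set of traces only removes constraints, so a
nonempty model `T` may be replaced by any singleton `{t} ⊆ T`; over a singleton the only
assignment is the constant one `fun _ => t`. On a constant assignment every path variable reads
the same trace, so an atomic tuple `τ` can move iff all its non-wildcard coordinates equal the
program `t` executes there: this is exactly what `collapseTuple` records, and by structural
induction `ψ` and `ψ'` agree on constant assignments.
-/

lemma forall_mem_singleton_imp_iff {ι α : Type*} (a : α) (p : (ι → α) → Prop) :
    (∀ f : ι → α, (∀ i, f i ∈ ({a} : Set α)) → p f) ↔ p (fun _ => a) :=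
  ⟨fun h => h _ fun _ => rfl, fun h f hf => (funext hf : f = fun _ => a) ▸ h⟩

lemma forall_eq_none_or_eq_some_iff {ι P : Type*} {t : ι → Option P} {σ : P}
    (hσ : ∀ l, t l = none ∨ t l = some σ) (hne : ∃ l, t l ≠ none) (a : P) :
    (∀ l, t l = none ∨ t l = some a) ↔ σ = a := by
  obtain ⟨l₀, hl₀⟩ := hne
  constructor
  · intro ha
    have hσl₀ : t l₀ = some σ := (hσ l₀).resolve_left hl₀
    have hal₀ : t l₀ = some a := (ha l₀).resolve_left hl₀
    exact Option.some_inj.mp (hσl₀.symm.trans hal₀)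
  · rintro rfl
    exact hσ

lemma Pg.rel_collapseTuple_const {AP P : Type} [Inhabited AP] {n : ℕ} (t : Fin n → Option P)
    (tr : Trace AP P) (i k : ℕ) :
    (collapseTuple AP t).Rel (fun _ => tr) i k ↔ (Pg.atom t : Pg AP P n).Rel (fun _ => tr) i k := by
  unfold collapseTuple
  split_ifs with hnone hσ
  · simp [Pg.Rel, hnone]
  · push Not at hnone
    simp only [Pg.Rel, reduceCtorEq, false_or, Option.some_inj, forall_const]
    rw [forall_eq_none_or_eq_some_iff hσ.choose_spec hnone]
  · constructor
    · rintro ⟨_, -, -, ⟨-, hlab, hnlab⟩, -⟩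
      exact absurd hlab hnlab
    · rintro ⟨-, hall⟩
      exact absurd ⟨tr.act i, hall⟩ hσ

mutual
theorem QF.sat_collapse_const {AP P : Type} [Inhabited AP] {n : ℕ} (φ : QF AP P n)
    (t : Trace AP P) :
    φ.collapse.Sat (fun _ => t) ↔ φ.Sat (fun _ => t) := by
  match φ with
  | .atom a l => simp only [QF.collapse, QF.Sat]
  | .not φ =>
      simp only [QF.collapse, QF.Sat]
      exact not_congr (φ.sat_collapse_const t)
  | .and φ ψ =>
      simp only [QF.collapse, QF.Sat]
      exact and_congr (φ.sat_collapse_const t) (ψ.sat_collapse_const t)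
  | .or φ ψ =>
      simp only [QF.collapse, QF.Sat]
      exact or_congr (φ.sat_collapse_const t) (ψ.sat_collapse_const t)
  | .dia α φ =>
      simp only [QF.collapse, QF.Sat]
      exact exists_congr fun j =>
        and_congr (α.rel_collapse_const t 0 j) (φ.sat_collapse_const (t.drop j))
  | .box α φ =>
      simp only [QF.collapse, QF.Sat]
      exact forall_congr' fun j =>
        imp_congr (α.rel_collapse_const t 0 j) (φ.sat_collapse_const (t.drop j))
  | .delta α =>
      simp only [QF.collapse, QF.Sat]
      exact exists_congr fun k => and_congr_right fun _ => and_congr_right fun _ =>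
        forall_congr' fun i => α.rel_collapse_const t (k i) (k (i + 1))

theorem Pg.rel_collapse_const {AP P : Type} [Inhabited AP] {n : ℕ} (α : Pg AP P n)
    (t : Trace AP P) (i k : ℕ) :
    α.collapse.Rel (fun _ => t) i k ↔ α.Rel (fun _ => t) i k := by
  match α with
  | .atom τ => exact Pg.rel_collapseTuple_const τ t i k
  | .eps => simp only [Pg.collapse, Pg.Rel]
  | .sum a b =>
      simp only [Pg.collapse, Pg.Rel]
      exact or_congr (a.rel_collapse_const t i k) (b.rel_collapse_const t i k)
  | .seq a b =>
      simp only [Pg.collapse, Pg.Rel]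
      exact exists_congr fun j => and_congr_right fun _ => and_congr_right fun _ =>
        and_congr (a.rel_collapse_const t i j) (b.rel_collapse_const t j k)
  | .star a =>
      simp only [Pg.collapse, Pg.Rel]
      exact exists_congr fun m => exists_congr fun js =>
        and_congr_right fun _ => and_congr_right fun _ =>
        forall_congr' fun l => and_congr_right fun _ =>
          a.rel_collapse_const t (js l.castSucc) (js l.succ)
  | .test φ =>
      simp only [Pg.collapse, Pg.Rel]
      exact and_congr_right fun _ => φ.sat_collapse_const (t.drop i)
end

lemma exists_nonempty_forall_sat_iff {ι α : Type*} (p : (ι → α) → Prop) :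
    (∃ T : Set α, T.Nonempty ∧ ∀ f : ι → α, (∀ i, f i ∈ T) → p f) ↔ ∃ a, p (fun _ => a) :=
  ⟨fun ⟨_, ⟨a, ha⟩, hT⟩ => ⟨a, hT _ fun _ => ha⟩,
    fun ⟨a, ha⟩ => ⟨{a}, Set.singleton_nonempty a, (forall_mem_singleton_imp_iff a p).mpr ha⟩⟩

/-- **Satisfiability of the `∀*`-fragment reduces to single traces**: `∀π₁…∀π_n. ψ` is
satisfiable by some nonempty trace set iff it is satisfiable by a singleton trace set;
equivalently, iff the collapsed one-variable formula `ψ'` is satisfied by a single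
trace. -/
theorem forall_fragment_sat {AP P : Type} [Inhabited AP] {n : ℕ} (hn : 0 < n)
    (ψ : QF AP P n) :
    ((∃ T : Set (Trace AP P), T.Nonempty ∧
        ∀ Pa : Fin n → Trace AP P, (∀ l, Pa l ∈ T) → ψ.Sat Pa)
      ↔ (∃ t : Trace AP P,
        ∀ Pa : Fin n → Trace AP P, (∀ l, Pa l ∈ ({t} : Set (Trace AP P))) → ψ.Sat Pa))
    ∧ ((∃ T : Set (Trace AP P), T.Nonempty ∧
        ∀ Pa : Fin n → Trace AP P, (∀ l, Pa l ∈ T) → ψ.Sat Pa)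
      ↔ (∃ t : Trace AP P, ψ.collapse.Sat (fun _ => t))) := by
  simp only [exists_nonempty_forall_sat_iff, forall_mem_singleton_imp_iff, QF.sat_collapse_const,
    and_self]
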